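/- Let q ∈ Q_{k-1}([0,1]^3) with k ≥ 2 and let 0 = x_1 < ... < x_{k+1} = 1 be distinct points. If ∂_1 q vanishes on the grid {(x_{j1},x_{j2},x_{j3}) : 2 ≤ j1 ≤ k, 1 ≤ j2,j3 ≤ k}, ∂_2 q vanishes on {(x_{j1},x_{j2},x_{j3}) : 2 ≤ j2 ≤ k, 1 ≤ j1,j3 ≤ k}, and ∂_3 q vanishes on {(x_{j1},x_{j2},x_{j3}) : 2 ≤ j3 ≤ k, 1 ≤ j1,j2 ≤ k}, then q is constant. -/

import Mathlib

/-! A partial derivative `∂ᵢ q` has degree below `k - 1` in `xᵢ` and at most `k - 1` in the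
other variables, so vanishing on a product grid with `k - 1` nodes in direction `i` and `k` nodes
in the other directions forces `∂ᵢ q = 0` (combinatorial Nullstellensatz). Over a field of
characteristic zero, a polynomial all of whose partial derivatives vanish is constant. -/

open MvPolynomial Finset

namespace MvPolynomial

variable {R σ : Type*}

section CommSemiring

variable [CommSemiring R]

lemma add_single_mem_support_of_mem_support_pderiv {p : MvPolynomial σ R} {i : σ}
    {m : σ →₀ ℕ} (hm : m ∈ (pderiv i p).support) :
    m + Finsupp.single i 1 ∈ p.support := by
  rw [mem_support_iff, coeff_pderiv] at hm
  exact mem_support_iff.mpr (left_ne_zero_of_mul hm)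

lemma degreeOf_pderiv_le (p : MvPolynomial σ R) (i j : σ) :
    degreeOf j (pderiv i p) ≤ degreeOf j p :=
  degreeOf_le_iff.mpr fun _ hm =>
    (Nat.le_add_right _ _).trans
      (monomial_le_degreeOf j (add_single_mem_support_of_mem_support_pderiv hm))

lemma degreeOf_pderiv_self_le (p : MvPolynomial σ R) (i : σ) :
    degreeOf i (pderiv i p) ≤ degreeOf i p - 1 :=
  degreeOf_le_iff.mpr fun m hm => by
    have := monomial_le_degreeOf i (add_single_mem_support_of_mem_support_pderiv hm)
    simp only [Finsupp.add_apply, Finsupp.single_eq_same] at this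
    omega

lemma pderiv_eq_zero_of_degreeOf_eq_zero {p : MvPolynomial σ R} {i : σ}
    (h : degreeOf i p = 0) : pderiv i p = 0 := by
  refine support_eq_empty.mp (eq_empty_of_forall_notMem fun m hm => ?_)
  have := monomial_le_degreeOf i (add_single_mem_support_of_mem_support_pderiv hm)
  simp [h] at this

theorem totalDegree_eq_zero_of_forall_pderiv_eq_zero [NoZeroDivisors R] [CharZero R]
    {p : MvPolynomial σ R} (h : ∀ i, pderiv i p = 0) : totalDegree p = 0 := by
  refine (totalDegree_eq_zero_iff σ p).mpr fun m hm i => ?_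
  by_contra hmi
  have hcoeff : coeff (m - Finsupp.single i 1) (pderiv i p) ≠ 0 := by
    have hle : Finsupp.single i 1 ≤ m :=
      Finsupp.single_le_iff.mpr (Nat.one_le_iff_ne_zero.mpr hmi)
    rw [coeff_pderiv, tsub_add_cancel_of_le hle]
    exact mul_ne_zero (mem_support_iff.mp hm) (Nat.cast_add_one_ne_zero _)
  simp [h i] at hcoeff

end CommSemiring

theorem pderiv_eq_zero_of_eval_zero_at_prod_finset [CommRing R] [IsDomain R] [Finite σ]
    (p : MvPolynomial σ R) (i : σ) (S : σ → Finset R)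
    (hi : degreeOf i p ≤ #(S i)) (hne : ∀ j ≠ i, degreeOf j p < #(S j))
    (Heval : ∀ x : σ → R, (∀ j, x j ∈ S j) → eval x (pderiv i p) = 0) :
    pderiv i p = 0 := by
  rcases (degreeOf i p).eq_zero_or_pos with h0 | hpos
  · exact pderiv_eq_zero_of_degreeOf_eq_zero h0
  refine eq_zero_of_eval_zero_at_prod_finset _ S (fun j => ?_) Heval
  rcases eq_or_ne j i with rfl | hj
  · have := degreeOf_pderiv_self_le p j
    omega
  · exact (degreeOf_pderiv_le p i j).trans_lt (hne j hj)

end MvPolynomial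

theorem stmt_14_general (k : ℕ) (hk : 2 ≤ k)
    (q : MvPolynomial (Fin 3) ℝ)
    (hq : ∀ i : Fin 3, degreeOf i q ≤ k - 1)
    (x : Fin (k + 1) → ℝ) (hx : StrictMono x)
    (h1 : ∀ j₁ j₂ j₃ : Fin (k + 1),
      1 ≤ (j₁ : ℕ) → (j₁ : ℕ) < k → (j₂ : ℕ) < k → (j₃ : ℕ) < k →
      MvPolynomial.eval ![x j₁, x j₂, x j₃] (pderiv 0 q) = 0)
    (h2 : ∀ j₁ j₂ j₃ : Fin (k + 1),
      1 ≤ (j₂ : ℕ) → (j₂ : ℕ) < k → (j₁ : ℕ) < k → (j₃ : ℕ) < k →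
      MvPolynomial.eval ![x j₁, x j₂, x j₃] (pderiv 1 q) = 0)
    (h3 : ∀ j₁ j₂ j₃ : Fin (k + 1),
      1 ≤ (j₃ : ℕ) → (j₃ : ℕ) < k → (j₁ : ℕ) < k → (j₂ : ℕ) < k →
      MvPolynomial.eval ![x j₁, x j₂, x j₃] (pderiv 2 q) = 0) :
    totalDegree q = 0 := by
  -- in the paper's 1-based indexing: `lower = {x₁, …, x_k}`, `interior = {x₂, …, x_k}`
  let lower := ((range k).attachFin fun n hn => by simp at hn; omega).image x
  let interior := ((Ico 1 k).attachFin fun n hn => by simp at hn; omega).image x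
  have card_lower : #lower = k := by
    simp [lower, card_image_of_injective _ hx.injective]
  have card_interior : #interior = k - 1 := by
    simp [interior, card_image_of_injective _ hx.injective]
  refine totalDegree_eq_zero_of_forall_pderiv_eq_zero fun i =>
    pderiv_eq_zero_of_eval_zero_at_prod_finset q i (fun j => if j = i then interior else lower)
      (by simpa [card_interior] using hq i)
      (fun j hj => by simpa [hj, card_lower] using (hq j).trans_lt (by omega)) ?_
  intro a ha
  obtain ⟨y₀, y₁, y₂, rfl⟩ : ∃ y₀ y₁ y₂, a = ![y₀, y₁, y₂] :=
    ⟨a 0, a 1, a 2, by ext j; fin_cases j <;> rfl⟩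
  have ha₀ := ha 0
  have ha₁ := ha 1
  have ha₂ := ha 2
  fin_cases i <;> simp [lower, interior] at ha₀ ha₁ ha₂ <;>
    obtain ⟨j₀, hj₀, rfl⟩ := ha₀ <;>
    obtain ⟨j₁, hj₁, rfl⟩ := ha₁ <;>
    obtain ⟨j₂, hj₂, rfl⟩ := ha₂
  · exact h1 j₀ j₁ j₂ hj₀.1 hj₀.2 hj₁ hj₂
  · exact h2 j₀ j₁ j₂ hj₁.1 hj₁.2 hj₀ hj₂
  · exact h3 j₀ j₁ j₂ hj₂.1 hj₂.2 hj₀ hj₁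

theorem stmt_14 (k : ℕ) (hk : 2 ≤ k)
    (q : MvPolynomial (Fin 3) ℝ)
    (hq : ∀ i : Fin 3, degreeOf i q ≤ k - 1)
    (x : Fin (k + 1) → ℝ) (hx : StrictMono x)
    (hx0 : x 0 = 0) (hxlast : x (Fin.last k) = 1)
    (h1 : ∀ j₁ j₂ j₃ : Fin (k + 1),
      1 ≤ (j₁ : ℕ) → (j₁ : ℕ) < k → (j₂ : ℕ) < k → (j₃ : ℕ) < k →
      MvPolynomial.eval ![x j₁, x j₂, x j₃] (pderiv 0 q) = 0)
    (h2 : ∀ j₁ j₂ j₃ : Fin (k + 1),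
      1 ≤ (j₂ : ℕ) → (j₂ : ℕ) < k → (j₁ : ℕ) < k → (j₃ : ℕ) < k →
      MvPolynomial.eval ![x j₁, x j₂, x j₃] (pderiv 1 q) = 0)
    (h3 : ∀ j₁ j₂ j₃ : Fin (k + 1),
      1 ≤ (j₃ : ℕ) → (j₃ : ℕ) < k → (j₁ : ℕ) < k → (j₂ : ℕ) < k →
      MvPolynomial.eval ![x j₁, x j₂, x j₃] (pderiv 2 q) = 0) :
    totalDegree q = 0 :=
  stmt_14_general k hk q hq x hx h1 h2 h3
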